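/- Let X, Y, U be types, f : X × U → X and h : X → Y, with the input-dependent sets [x]_k, [x]_k^+ and [x]_{-1}^+ = X as in the context. Suppose Assumption 1 holds with some p ≥ 1 (for every x ∈ X, the set [x]_{p-1} contains at most one element) and Assumption 2 holds (for all x, x̂ and k, x̂ ∈ [x]_k^+ implies [x̂]_k^+ = [x]_k^+). For x̂ ∈ X and y in the image of h, let π(x̂, y) be the largest index j ∈ {-1, 0, …, p-2} such that [x̂]_j^+ ∩ h^{-1}(y) ≠ ∅. Fix x ∈ X and an input sequence u : ℕ → U, and let φ(0) = x, φ(k+1) = f(φ(k), u(k)). Then for every sequence x̂ : ℕ → X satisfying x̂(k+1) ∈ { f(z, u(k)) : z ∈ [x̂(k)]_{π(x̂(k), h(φ(k)))}^+ ∩ h^{-1}(h(φ(k))) } for all k, one has x̂(k) = φ(k) for all k ≥ p. -/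
import Mathlib


/-- Input-dependent equivalence class `[x]ₖ` for `x⁺ = f (x, u)`, `y = h x`:
`[x]₀ = {z | h z = h x}`, `[x]ₖ⁺ = ⋃_{f(η,u)=x} f ([η]ₖ, u)`,
`[x]_{k+1} = [x]ₖ⁺ ∩ [x]₀`. -/
def clsU {X Y U : Type*} (f : X × U → X) (h : X → Y) : ℕ → X → Set X
  | 0, x => {z | h z = h x}
  | k + 1, x =>
      {v | ∃ z η u, f (η, u) = x ∧ z ∈ clsU f h k η ∧ f (z, u) = v} ∩ {z | h z = h x}

/-- The set `[x]ₖ⁺ = ⋃_{f(η,u)=x} f ([η]ₖ, u)`. -/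
def clsUPlus {X Y U : Type*} (f : X × U → X) (h : X → Y) (k : ℕ) (x : X) : Set X :=
  {v | ∃ z η u, f (η, u) = x ∧ z ∈ clsU f h k η ∧ f (z, u) = v}

/-- The sets `[x]_{j-1}⁺` indexed by the shifted index `j ∈ ℕ` (so that the index `j`
stands for `j - 1 ∈ {-1, 0, 1, …}`); in particular `[x]_{-1}⁺ = X`. -/
def clsUPlusE {X Y U : Type*} (f : X × U → X) (h : X → Y) : ℕ → X → Set X
  | 0, _ => Set.univ
  | k + 1, x => clsUPlus f h k x

lemma clsU_step {X Y U : Type*} (f : X × U → X) (h : X → Y) :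
    ∀ (k : ℕ) (x : X), clsU f h (k + 1) x ⊆ clsU f h k x := by
  intro k
  induction k with
  | zero => exact fun x v hv => hv.2
  | succ k ih =>
    rintro x v ⟨⟨z, η, w, hηw, hz, hzv⟩, hv0⟩
    exact ⟨⟨z, η, w, hηw, ih η hz, hzv⟩, hv0⟩

lemma clsU_anti {X Y U : Type*} (f : X × U → X) (h : X → Y) {j k : ℕ} (hjk : j ≤ k)
    (x : X) : clsU f h k x ⊆ clsU f h j x := by
  obtain ⟨d, rfl⟩ := Nat.exists_eq_add_of_le hjk
  clear hjk
  induction d with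
  | zero => exact fun v hv => hv
  | succ d ih => exact fun v hv => ih (clsU_step f h (j + d) x hv)

lemma clsUPlus_anti {X Y U : Type*} (f : X × U → X) (h : X → Y) {j k : ℕ} (hjk : j ≤ k)
    (x : X) : clsUPlus f h k x ⊆ clsUPlus f h j x := by
  rintro v ⟨z, η, w, hηw, hz, hzv⟩
  exact ⟨z, η, w, hηw, clsU_anti f h hjk η hz, hzv⟩

lemma clsUPlusE_anti {X Y U : Type*} (f : X × U → X) (h : X → Y) :
    ∀ {j k : ℕ}, j ≤ k → ∀ x, clsUPlusE f h k x ⊆ clsUPlusE f h j x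
  | 0, _, _, x => fun v _ => Set.mem_univ v
  | j + 1, 0, hjk, _ => absurd hjk (Nat.not_succ_le_zero j)
  | j + 1, k + 1, hjk, x => clsUPlus_anti f h (Nat.succ_le_succ_iff.mp hjk) x

lemma clsU_eq_inter {X Y U : Type*} (f : X × U → X) (h : X → Y) :
    ∀ (k : ℕ) (x : X), clsU f h k x = clsUPlusE f h k x ∩ {z | h z = h x}
  | 0, x => (Set.univ_inter _).symm
  | k + 1, x => rfl

/-- (Theorem 4, system with input.) Under Assumption 1 (each `[x]_{p-1}` is singleton
or empty, `p ≥ 1`) and Assumption 2 (`x̂ ∈ [x]ₖ⁺ ⟹ [x̂]ₖ⁺ = [x]ₖ⁺`), with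
`π(x̂, y)` the largest index `j ∈ {-1, 0, …, p-2}` (encoded by the shifted index
`π(x̂,y) ∈ {0, …, p-1}`) such that `[x̂]_j⁺ ∩ h⁻¹(y) ≠ ∅`, the system
`x̂⁺ ∈ f ([x̂]_{π(x̂,y)}⁺ ∩ h⁻¹(y), u)` is a deadbeat observer for
`x⁺ = f (x, u)`, `y = h x`: every solution satisfies `x̂ k = φ k` for all `k ≥ p`. -/
theorem stmt13 {X Y U : Type*} (f : X × U → X) (h : X → Y) (p : ℕ) (hp : 1 ≤ p)
    (hassume1 : ∀ x : X, (clsU f h (p - 1) x).Subsingleton)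
    (hassume2 : ∀ (x xhat : X) (k : ℕ),
      xhat ∈ clsUPlus f h k x → clsUPlus f h k xhat = clsUPlus f h k x)
    (π : X → Y → ℕ)
    (hπle : ∀ (xhat : X) (y : Y), y ∈ Set.range h → π xhat y ≤ p - 1)
    (hπne : ∀ (xhat : X) (y : Y), y ∈ Set.range h →
      (clsUPlusE f h (π xhat y) xhat ∩ h ⁻¹' {y}).Nonempty)
    (hπmax : ∀ (xhat : X) (y : Y) (j : ℕ), y ∈ Set.range h → j ≤ p - 1 →
      (clsUPlusE f h j xhat ∩ h ⁻¹' {y}).Nonempty → j ≤ π xhat y)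
    (x : X) (u : ℕ → U) (φ : ℕ → X)
    (hφ0 : φ 0 = x) (hφ : ∀ k : ℕ, φ (k + 1) = f (φ k, u k))
    (xhat : ℕ → X)
    (hobs : ∀ k : ℕ, xhat (k + 1) ∈
      {v | ∃ z ∈ clsUPlusE f h (π (xhat k) (h (φ k))) (xhat k) ∩ h ⁻¹' {h (φ k)},
        f (z, u k) = v}) :
    ∀ k : ℕ, p ≤ k → xhat k = φ k := by
  have hyrange : ∀ k, h (φ k) ∈ Set.range h := fun k => ⟨φ k, rfl⟩
  -- reflexivity along the trajectory
  have href : ∀ k j, j ≤ k → φ k ∈ clsU f h j (φ k) := by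
    intro k
    induction k with
    | zero =>
      intro j hj
      interval_cases j
      exact rfl
    | succ k ih =>
      intro j hj
      match j with
      | 0 => exact rfl
      | i + 1 =>
        exact ⟨⟨φ k, φ k, u k, (hφ k).symm, ih i (Nat.succ_le_succ_iff.mp hj),
          (hφ k).symm⟩, rfl⟩
  -- main invariant
  have Q : ∀ k, ∀ z ∈ clsUPlusE f h (π (xhat k) (h (φ k))) (xhat k) ∩ h ⁻¹' {h (φ k)},
      z ∈ clsU f h (min k (p - 1)) (φ k) := by
    intro k
    induction k with
    | zero =>
      intro z hz
      have h0 : min 0 (p - 1) = 0 := Nat.zero_min _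
      rw [h0]
      exact hz.2
    | succ k ih =>
      obtain ⟨zk, hzkmem, hzkf⟩ := hobs k
      have hzk := ih zk hzkmem
      have hxhatmem : xhat (k + 1) ∈ clsUPlus f h (min k (p - 1)) (φ (k + 1)) :=
        ⟨zk, φ k, u k, (hφ k).symm, hzk, hzkf⟩
      have heqj : ∀ j ≤ min k (p - 1),
          clsUPlus f h j (xhat (k + 1)) = clsUPlus f h j (φ (k + 1)) := fun j hj =>
        hassume2 _ _ j (clsUPlus_anti f h hj _ hxhatmem)
      have heqE : ∀ j ≤ min k (p - 1) + 1,
          clsUPlusE f h j (xhat (k + 1)) = clsUPlusE f h j (φ (k + 1)) := by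
        intro j hj
        match j with
        | 0 => rfl
        | i + 1 => exact heqj i (Nat.succ_le_succ_iff.mp hj)
      have hm'le : min (k + 1) (p - 1) ≤ min k (p - 1) + 1 := by omega
      have hm'p : min (k + 1) (p - 1) ≤ p - 1 := min_le_right _ _
      have hφmem : φ (k + 1) ∈ clsUPlusE f h (min k (p - 1) + 1) (xhat (k + 1)) := by
        show φ (k + 1) ∈ clsUPlus f h (min k (p - 1)) (xhat (k + 1))
        rw [heqj _ le_rfl]
        exact ⟨φ k, φ k, u k, (hφ k).symm, href k _ (min_le_left _ _), (hφ k).symm⟩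
      have hne : (clsUPlusE f h (min (k + 1) (p - 1)) (xhat (k + 1)) ∩
          h ⁻¹' {h (φ (k + 1))}).Nonempty :=
        ⟨φ (k + 1), clsUPlusE_anti f h hm'le _ hφmem, rfl⟩
      have hπge : min (k + 1) (p - 1) ≤ π (xhat (k + 1)) (h (φ (k + 1))) :=
        hπmax _ _ _ (hyrange _) hm'p hne
      intro z hz
      have hz1 : z ∈ clsUPlusE f h (min (k + 1) (p - 1)) (φ (k + 1)) := by
        rw [← heqE _ hm'le]
        exact clsUPlusE_anti f h hπge _ hz.1
      rw [clsU_eq_inter]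
      exact ⟨hz1, hz.2⟩
  intro k hk
  obtain ⟨j, rfl⟩ : ∃ j, k = j + 1 := ⟨k - 1, by omega⟩
  obtain ⟨z, hzmem, hzf⟩ := hobs j
  have hz := Q j z hzmem
  have hmin : min j (p - 1) = p - 1 := by omega
  rw [hmin] at hz
  have hzφ : z = φ j := hassume1 (φ j) hz (href j (p - 1) (by omega))
  rw [← hzf, hzφ, ← hφ j]
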